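/- arXiv:2206.10431 — 2 statements merged into one kernel-verified Lean document; each statement's English description precedes it below -/
import Mathlib

section
/- Let H be an n×n real symmetric matrix with bosonic form H̃ = H₋ − H₊, and let e₀ be the first standard basis vector. For every β ≥ 0, ⟨e₀| exp(−βH̃) |e₀⟩ ≥ ⟨e₀| exp(−βH) |e₀⟩; i.e., the state non-stoquasticity indicator S(H, e₀) is nonnegative. -/
open Matrix Filter

/-- The positive off-diagonal part `H₊` of a real matrix:
`(H₊)ᵢⱼ = Hᵢⱼ` if `i ≠ j` and `Hᵢⱼ > 0`, and `0` otherwise. -/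
noncomputable def Hplus {n : ℕ} (H : Matrix (Fin n) (Fin n) ℝ) : Matrix (Fin n) (Fin n) ℝ :=
  Matrix.of fun i j => if i ≠ j ∧ 0 < H i j then H i j else 0

/-- The remaining part `H₋ := H - H₊`. -/
noncomputable def Hminus {n : ℕ} (H : Matrix (Fin n) (Fin n) ℝ) : Matrix (Fin n) (Fin n) ℝ :=
  H - Hplus H

/-- The bosonic form `H̃ := H₋ - H₊` of `H`. -/
noncomputable def bosonic {n : ℕ} (H : Matrix (Fin n) (Fin n) ℝ) : Matrix (Fin n) (Fin n) ℝ :=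
  Hminus H - Hplus H

/-- The entrywise L1 norm `‖M‖_{L1} = ∑ᵢⱼ |Mᵢⱼ|`. -/
noncomputable def L1 {n : ℕ} (M : Matrix (Fin n) (Fin n) ℝ) : ℝ :=
  ∑ i, ∑ j, |M i j|

/-- `α = maxᵢ Hᵢᵢ`, the largest diagonal entry. -/
noncomputable def alphaMax {n : ℕ} [NeZero n] (H : Matrix (Fin n) (Fin n) ℝ) : ℝ :=
  ⨆ i, H i i

/-! Shifting `-βH` and `-βH̃` by `βα · 1`, with `α` the largest diagonal entry, makes the
diagonal nonnegative; then `-βH̃ + βα` is entrywise the absolute value of `-βH + βα`, so every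
power, and hence the exponential series, of the latter is entrywise dominated by that of the
former. The shift only rescales both exponentials by the same factor `e^{βα} > 0`. -/

open NormedSpace

namespace Matrix

variable {ι : Type*} [Fintype ι] [DecidableEq ι]

theorem abs_pow_apply_le {A B : Matrix ι ι ℝ} (hAB : ∀ i j, |A i j| ≤ B i j) (k : ℕ) (i j : ι) :
    |(A ^ k) i j| ≤ (B ^ k) i j := by
  induction k generalizing j with
  | zero => by_cases h : i = j <;> simp [h]
  | succ k ih =>
    rw [pow_succ, pow_succ, mul_apply, mul_apply]
    calc |∑ l, (A ^ k) i l * A l j| ≤ ∑ l, |(A ^ k) i l| * |A l j| := by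
          simp only [← abs_mul]
          exact Finset.abs_sum_le_sum_abs _ _
      _ ≤ ∑ l, (B ^ k) i l * B l j := by
          refine Finset.sum_le_sum fun l _ => ?_
          exact mul_le_mul (ih l) (hAB l j) (abs_nonneg _) ((abs_nonneg _).trans (ih l))

theorem exp_apply_hasSum (A : Matrix ι ι ℝ) (i j : ι) :
    HasSum (fun k : ℕ => (k.factorial : ℝ)⁻¹ * (A ^ k) i j) (exp A i j) := by
  let : NormedRing (Matrix ι ι ℝ) := Matrix.linftyOpNormedRing
  let : NormedAlgebra ℝ (Matrix ι ι ℝ) := Matrix.linftyOpNormedAlgebra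
  exact (exp_series_hasSum_exp' (𝕂 := ℝ) A).map (entryAddMonoidHom ℝ i j)
    (continuous_id.matrix_elem i j)

theorem exp_apply_le_of_abs_le {A B : Matrix ι ι ℝ} (hAB : ∀ i j, |A i j| ≤ B i j) (i j : ι) :
    exp A i j ≤ exp B i j :=
  hasSum_le
    (fun k => mul_le_mul_of_nonneg_left ((le_abs_self _).trans (abs_pow_apply_le hAB k i j))
      (by positivity))
    (exp_apply_hasSum A i j) (exp_apply_hasSum B i j)

theorem exp_add_smul_one (M : Matrix ι ι ℝ) (c : ℝ) :
    exp (M + c • 1) = Real.exp c • exp M := by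
  have hcomm : Commute M (c • 1) := (Commute.one_right M).smul_right c
  have hscalar : exp (c • 1 : Matrix ι ι ℝ) = Real.exp c • 1 := by
    rw [← diagonal_one, ← diagonal_smul, exp_diagonal, ← diagonal_smul]
    congr 1
    ext i
    simp [Real.exp_eq_exp_ℝ]
  rw [exp_add_of_commute _ _ hcomm, hscalar, mul_smul_comm, mul_one]

theorem IsSymm.exp_apply_self_nonneg {M : Matrix ι ι ℝ} (hM : M.IsSymm) (i : ι) :
    0 ≤ NormedSpace.exp M i i := by
  have hhalf : (NormedSpace.exp ((2 : ℝ)⁻¹ • M)).IsSymm := (hM.smul _).exp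
  have hsq : NormedSpace.exp M = NormedSpace.exp ((2 : ℝ)⁻¹ • M) ^ 2 := by
    rw [← exp_nsmul, ← Nat.cast_smul_eq_nsmul ℝ, smul_smul]
    norm_num
  rw [hsq, sq, mul_apply]
  exact Finset.sum_nonneg fun l _ => hhalf.apply l i ▸ mul_self_nonneg _

end Matrix

theorem bosonic_apply {n : ℕ} (H : Matrix (Fin n) (Fin n) ℝ) (i j : Fin n) :
    bosonic H i j = if i = j then H i j else -|H i j| := by
  simp only [bosonic, Hminus, Hplus, Matrix.sub_apply]
  by_cases h : i = j
  · simp [h]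
  · by_cases hp : 0 < H i j
    · simp [h, hp, abs_of_pos hp]
    · simp [h, hp, abs_of_nonpos (not_lt.1 hp)]

theorem le_alphaMax {n : ℕ} [NeZero n] (H : Matrix (Fin n) (Fin n) ℝ) (i : Fin n) :
    H i i ≤ alphaMax H :=
  le_ciSup (f := fun i => H i i) (Set.finite_range _).bddAbove i

theorem abs_shift_apply_le_shift_bosonic {n : ℕ} [NeZero n] (H : Matrix (Fin n) (Fin n) ℝ)
    {β : ℝ} (hβ : 0 ≤ β) (i j : Fin n) :
    |(-β • H + (β * alphaMax H) • 1) i j| ≤ (-β • bosonic H + (β * alphaMax H) • 1) i j := by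
  rcases eq_or_ne i j with rfl | h
  · have : β * H i i ≤ β * alphaMax H := mul_le_mul_of_nonneg_left (le_alphaMax H i) hβ
    simp only [Matrix.add_apply, Matrix.smul_apply, one_apply_eq, bosonic_apply, if_true,
      smul_eq_mul]
    rw [abs_of_nonneg (by linarith)]
  · simp [bosonic_apply, h, abs_mul, abs_of_nonneg hβ]

/-- For a real symmetric matrix `H` with bosonic form `H̃ = H₋ - H₊`, the first standard basis
vector `e₀`, and any `β ≥ 0`, `⟨e₀|e^{-βH̃}|e₀⟩ ≥ ⟨e₀|e^{-βH}|e₀⟩`; i.e. the state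
non-stoquasticity indicator `S(H, e₀)` is nonnegative. -/
theorem state_nsi_nonneg {n : ℕ} [NeZero n] (H : Matrix (Fin n) (Fin n) ℝ) (hH : H.IsSymm)
    (β : ℝ) (hβ : 0 ≤ β) :
    (NormedSpace.exp (-β • H)) 0 0 ≤ (NormedSpace.exp (-β • bosonic H)) 0 0 ∧
    0 ≤ ((NormedSpace.exp (-β • bosonic H)) 0 0 - (NormedSpace.exp (-β • H)) 0 0) /
        (NormedSpace.exp (-β • H)) 0 0 := by
  have hshift := exp_apply_le_of_abs_le (abs_shift_apply_le_shift_bosonic H hβ) 0 0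
  simp only [exp_add_smul_one, Matrix.smul_apply, smul_eq_mul] at hshift
  have hle := le_of_mul_le_mul_left hshift (Real.exp_pos _)
  exact ⟨hle, div_nonneg (sub_nonneg.2 hle) ((hH.smul (-β)).exp_apply_self_nonneg 0)⟩
end

section
/- Let A and B be arbitrary n×n real matrices and e₀ the first standard basis vector. Then |⟨e₀| (exp(A + B) − exp(A − B)) |e₀⟩| ≤ 2·exp(‖A‖_{L1})·sinh(‖B‖_{L1}), where ‖M‖_{L1} := Σ_{i,j} |M_{ij}|. -/
open Matrix

/-!
Expanding `(A + B)^m - (A - B)^m` into words in `A` and `B`, only the words with an odd number of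
`B`s survive, each twice. A submultiplicative seminorm `p` therefore bounds it by the same
expansion of `(p A + p B)^m - (p A - p B)^m`, in which all terms are nonnegative; this is proved
by a joint induction with the sum `(A + B)^m + (A - B)^m`, which collects the even words.
The entrywise L1 norm is such a seminorm on matrices, and it dominates every entry, so summing
the exponential series termwise gives `exp(a + b) - exp(a - b) = 2 exp a sinh b` as a bound.
-/

section PowRecurrence

variable {R : Type*} [Ring R] (x y : R) (k : ℕ)

theorem add_pow_succ_sub_sub_pow_succ :
    (x + y) ^ (k + 1) - (x - y) ^ (k + 1) =
      ((x + y) ^ k + (x - y) ^ k) * y + ((x + y) ^ k - (x - y) ^ k) * x := by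
  simp only [pow_succ]
  noncomm_ring

theorem add_pow_succ_add_sub_pow_succ :
    (x + y) ^ (k + 1) + (x - y) ^ (k + 1) =
      ((x + y) ^ k + (x - y) ^ k) * x + ((x + y) ^ k - (x - y) ^ k) * y := by
  simp only [pow_succ]
  noncomm_ring

end PowRecurrence

namespace RingSeminorm

variable {R : Type*} [Ring R] (p : RingSeminorm R) (x y : R)

theorem map_mul_add_mul_le_of_le {s d u v : R} {S D : ℝ} (hs : p s ≤ S) (hd : p d ≤ D) :
    p (s * u + d * v) ≤ S * p u + D * p v :=
  calc p (s * u + d * v) ≤ p s * p u + p d * p v :=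
        (map_add_le_add p _ _).trans (add_le_add (map_mul_le_mul p _ _) (map_mul_le_mul p _ _))
    _ ≤ S * p u + D * p v := by gcongr

theorem map_add_pow_succ_sub_sub_pow_succ_le_and (m : ℕ) :
    p ((x + y) ^ (m + 1) - (x - y) ^ (m + 1)) ≤
        (p x + p y) ^ (m + 1) - (p x - p y) ^ (m + 1) ∧
      p ((x + y) ^ (m + 1) + (x - y) ^ (m + 1)) ≤
        (p x + p y) ^ (m + 1) + (p x - p y) ^ (m + 1) := by
  induction m with
  | zero =>
    simp only [zero_add, pow_one, add_sub_sub_cancel, add_add_sub_cancel]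
    exact ⟨(map_add_le_add p y y).trans_eq (by ring), (map_add_le_add p x x).trans_eq (by ring)⟩
  | succ m ih =>
    rw [add_pow_succ_sub_sub_pow_succ x y (m + 1), add_pow_succ_sub_sub_pow_succ (p x) (p y) (m + 1),
      add_pow_succ_add_sub_pow_succ x y (m + 1), add_pow_succ_add_sub_pow_succ (p x) (p y) (m + 1)]
    exact ⟨p.map_mul_add_mul_le_of_le ih.2 ih.1, p.map_mul_add_mul_le_of_le ih.2 ih.1⟩

theorem map_add_pow_sub_sub_pow_le (m : ℕ) :
    p ((x + y) ^ m - (x - y) ^ m) ≤ (p x + p y) ^ m - (p x - p y) ^ m := by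
  cases m with
  | zero => simp
  | succ m => exact (p.map_add_pow_succ_sub_sub_pow_succ_le_and x y m).1

end RingSeminorm

section L1

variable {n : ℕ} (M N : Matrix (Fin n) (Fin n) ℝ)

theorem sum_abs_row_le_L1 (i : Fin n) : ∑ j, |M i j| ≤ L1 M :=
  Finset.single_le_sum (f := fun i => ∑ j, |M i j|)
    (fun _ _ => Finset.sum_nonneg fun _ _ => abs_nonneg _) (Finset.mem_univ i)

theorem abs_apply_le_L1 (i j : Fin n) : |M i j| ≤ L1 M :=
  (Finset.single_le_sum (f := fun j => |M i j|) (fun _ _ => abs_nonneg _)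
    (Finset.mem_univ j)).trans (sum_abs_row_le_L1 M i)

theorem L1_add_le : L1 (M + N) ≤ L1 M + L1 N := by
  simp only [L1, Matrix.add_apply, ← Finset.sum_add_distrib]
  gcongr
  exact abs_add_le _ _

theorem L1_mul_le : L1 (M * N) ≤ L1 M * L1 N :=
  calc L1 (M * N) ≤ ∑ i, ∑ j, ∑ k, |M i k| * |N k j| := by
        simp only [L1, mul_apply, ← abs_mul]
        gcongr
        exact Finset.abs_sum_le_sum_abs _ _
    _ = ∑ i, ∑ k, |M i k| * ∑ j, |N k j| := by
        simp only [Finset.mul_sum]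
        exact Finset.sum_congr rfl fun _ _ => Finset.sum_comm
    _ ≤ ∑ i, ∑ k, |M i k| * L1 N := by
        gcongr with i _ k _
        exact sum_abs_row_le_L1 N k
    _ = L1 M * L1 N := by simp only [L1, Finset.sum_mul]

variable (n) in
noncomputable def L1RingSeminorm : RingSeminorm (Matrix (Fin n) (Fin n) ℝ) where
  toFun := L1
  map_zero' := by simp [L1]
  add_le' := L1_add_le
  neg' := by simp [L1]
  mul_le' := L1_mul_le

end L1

open NormedSpace Nat

theorem Matrix.hasSum_exp_apply {𝕂 ι : Type*} [RCLike 𝕂] [Fintype ι] [DecidableEq ι]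
    (X : Matrix ι ι 𝕂) (i j : ι) : HasSum (fun m => (X ^ m) i j / m !) (exp X i j) := by
  have h : HasSum (fun m => (m !⁻¹ : 𝕂) • X ^ m) (exp X) := by
    open scoped Norms.Operator in exact exp_series_hasSum_exp' X
  simpa [div_eq_inv_mul] using Pi.hasSum.1 (Pi.hasSum.1 h i) j

theorem abs_exp_add_sub_exp_sub_apply_le {n : ℕ} (A B : Matrix (Fin n) (Fin n) ℝ) (i j : Fin n) :
    |(exp (A + B) - exp (A - B)) i j| ≤ Real.exp (L1 A + L1 B) - Real.exp (L1 A - L1 B) := by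
  have hM : HasSum (fun m => ((A + B) ^ m - (A - B) ^ m) i j / m !)
      ((exp (A + B) - exp (A - B)) i j) := by
    simpa only [Matrix.sub_apply, sub_div] using
      (hasSum_exp_apply (A + B) i j).sub (hasSum_exp_apply (A - B) i j)
  have hR : HasSum (fun m => ((L1 A + L1 B) ^ m - (L1 A - L1 B) ^ m) / m !)
      (Real.exp (L1 A + L1 B) - Real.exp (L1 A - L1 B)) := by
    simpa only [Real.exp_eq_exp_ℝ, sub_div] using
      (expSeries_div_hasSum_exp (L1 A + L1 B)).sub (expSeries_div_hasSum_exp (L1 A - L1 B))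
  refine hM.norm_le_of_bounded hR fun m => ?_
  rw [Real.norm_eq_abs, abs_div, Nat.abs_cast]
  gcongr
  exact (abs_apply_le_L1 _ i j).trans ((L1RingSeminorm n).map_add_pow_sub_sub_pow_le A B m)

/-- For arbitrary real `n×n` matrices `A`, `B` and the first standard basis vector `e₀`
(so that `⟨e₀|M|e₀⟩` is the top-left entry `M 0 0`),
`|⟨e₀|(exp(A+B) - exp(A-B))|e₀⟩| ≤ 2 exp(‖A‖_{L1}) sinh(‖B‖_{L1})`. -/
theorem abs_entry_exp_sub_exp_le {n : ℕ} [NeZero n] (A B : Matrix (Fin n) (Fin n) ℝ) :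
    |(NormedSpace.exp (A + B) - NormedSpace.exp (A - B)) 0 0| ≤
      2 * Real.exp (L1 A) * Real.sinh (L1 B) :=
  calc _ ≤ Real.exp (L1 A + L1 B) - Real.exp (L1 A - L1 B) :=
        abs_exp_add_sub_exp_sub_apply_le A B 0 0
    _ = 2 * Real.exp (L1 A) * Real.sinh (L1 B) := by
        rw [Real.sinh_eq, Real.exp_add, Real.exp_sub, Real.exp_neg]
        ring
end
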